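/- arXiv:2603.24156 — 2 statements merged into one kernel-verified Lean document; each statement's English description precedes it below -/
import Mathlib

section
/- Let E = ℝ^d with the Euclidean inner product, let g : E → ℝ be differentiable with L-Lipschitz gradient ∇g (L > 0), let f : E → ℝ, let F : E × E → ℝ be a tangent majorant of f, let 0 < τ < 1/L, set h = f + g, and assume h is bounded from below. Let (x^(n)) be a sequence in E such that for every n, x^(n+1) is a global minimizer of z ↦ F(z, x^(n)) + g(x^(n)) + ⟨z − x^(n), ∇g(x^(n))⟩ + (1/(2τ))‖z − x^(n)‖². Then the successive differences tend to zero: ‖x^(n+1) − x^(n)‖ → 0 as n → ∞. -/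
/-!
Along the segment from `p` to `p + v`, the function `t ↦ g (p + t • v) - t ⟪∇g p, v⟫ - (L/2) t² ‖v‖²`
has nonpositive derivative when `∇g` is `L`-Lipschitz; this gives the descent lemma
`g q ≤ g p + ⟪∇g p, q - p⟫ + (L/2) ‖q - p‖²`. Comparing the surrogate value at its minimizer
`x⁺` with its value at `x`, where it equals `f x + g x`, and bounding `f` by `F` and `g` by the
descent lemma, gives the sufficient decrease
`(f + g) x⁺ + (1/(2τ) - L/2) ‖x⁺ - x‖² ≤ (f + g) x`, with `1/(2τ) - L/2 > 0` since `τ < 1/L`.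
Hence `(f + g) (x n)` is antitone and bounded below, so it converges, and its successive
differences, which dominate a positive multiple of `‖x (n + 1) - x n‖²`, tend to zero.
-/

open scoped RealInnerProductSpace
open Filter Topology

section Descent

variable {E : Type*} [NormedAddCommGroup E] [InnerProductSpace ℝ E] [CompleteSpace E]
  {g : E → ℝ} {L : ℝ}

lemma hasDerivAt_comp_add_smul (hg : Differentiable ℝ g) (p v : E) (t : ℝ) :
    HasDerivAt (fun s : ℝ => g (p + s • v)) ⟪gradient g (p + t • v), v⟫ t := by
  have hline : HasDerivAt (fun s : ℝ => p + s • v) v t := by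
    simpa using ((hasDerivAt_id t).smul_const v).const_add p
  rw [inner_gradient_left]
  exact (hg _).hasFDerivAt.comp_hasDerivAt t hline

lemma inner_gradient_add_smul_sub_le
    (hlip : ∀ a b : E, ‖gradient g a - gradient g b‖ ≤ L * ‖a - b‖) (p v : E) {t : ℝ}
    (ht : 0 ≤ t) : ⟪gradient g (p + t • v) - gradient g p, v⟫ ≤ L * t * ‖v‖ ^ 2 :=
  calc ⟪gradient g (p + t • v) - gradient g p, v⟫
      ≤ ‖gradient g (p + t • v) - gradient g p‖ * ‖v‖ := real_inner_le_norm _ _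
    _ ≤ L * ‖p + t • v - p‖ * ‖v‖ := by gcongr; exact hlip _ _
    _ = L * t * ‖v‖ ^ 2 := by
      rw [add_sub_cancel_left, norm_smul, Real.norm_of_nonneg ht]; ring

theorem descent_lemma (hg : Differentiable ℝ g)
    (hlip : ∀ a b : E, ‖gradient g a - gradient g b‖ ≤ L * ‖a - b‖) (p q : E) :
    g q ≤ g p + ⟪gradient g p, q - p⟫ + L / 2 * ‖q - p‖ ^ 2 := by
  set v := q - p
  let φ : ℝ → ℝ := fun t => g (p + t • v) - t * ⟪gradient g p, v⟫ - L / 2 * t ^ 2 * ‖v‖ ^ 2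
  have hφ : ∀ t, HasDerivAt φ
      (⟪gradient g (p + t • v), v⟫ - ⟪gradient g p, v⟫ - L * t * ‖v‖ ^ 2) t := fun t => by
    have hquad : HasDerivAt (fun s : ℝ => L / 2 * s ^ 2 * ‖v‖ ^ 2) (L * t * ‖v‖ ^ 2) t :=
      (((hasDerivAt_pow 2 t).const_mul (L / 2)).mul_const _).congr_deriv (by ring)
    exact ((hasDerivAt_comp_add_smul hg p v t).sub (hasDerivAt_mul_const _)).sub hquad
  have hanti : AntitoneOn φ (Set.Icc 0 1) := by
    refine antitoneOn_of_deriv_nonpos (convex_Icc 0 1)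
      (HasDerivAt.continuousOn fun t _ => hφ t)
      (fun t _ => (hφ t).differentiableAt.differentiableWithinAt) fun t ht => ?_
    rw [interior_Icc] at ht
    have hslope := inner_gradient_add_smul_sub_le hlip p v ht.1.le
    rw [inner_sub_left] at hslope
    rw [(hφ t).deriv]
    linarith
  have h01 := hanti (Set.left_mem_Icc.2 zero_le_one) (Set.right_mem_Icc.2 zero_le_one)
    zero_le_one
  simp only [φ, zero_smul, add_zero, one_smul, zero_mul, sub_zero, one_pow, mul_one,
    ne_eq, OfNat.ofNat_ne_zero, not_false_eq_true, zero_pow, mul_zero] at h01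
  rw [add_sub_cancel] at h01
  linarith

end Descent

section MajorizedForwardBackward

variable {E : Type*} [NormedAddCommGroup E] [InnerProductSpace ℝ E] [CompleteSpace E]

noncomputable def fbSurrogate (F : E × E → ℝ) (g : E → ℝ) (τ : ℝ) (xt z : E) : ℝ :=
  F (z, xt) + g xt + ⟪z - xt, gradient g xt⟫ + 1 / (2 * τ) * ‖z - xt‖ ^ 2

lemma fbSurrogate_self (F : E × E → ℝ) (g : E → ℝ) (τ : ℝ) (x : E) :
    fbSurrogate F g τ x x = F (x, x) + g x := by
  simp [fbSurrogate]

theorem add_add_mul_sq_le_of_fbSurrogate_le {f g : E → ℝ} {F : E × E → ℝ} {L τ : ℝ}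
    (hg : Differentiable ℝ g)
    (hlip : ∀ a b : E, ‖gradient g a - gradient g b‖ ≤ L * ‖a - b‖) {x x' : E}
    (hmaj : f x' ≤ F (x', x)) (hdiag : F (x, x) = f x)
    (hmin : fbSurrogate F g τ x x' ≤ fbSurrogate F g τ x x) :
    f x' + g x' + (1 / (2 * τ) - L / 2) * ‖x' - x‖ ^ 2 ≤ f x + g x := by
  rw [fbSurrogate_self, hdiag, fbSurrogate] at hmin
  have hdescent := descent_lemma hg hlip x x'
  rw [real_inner_comm] at hdescent
  linarith

end MajorizedForwardBackward

theorem tendsto_zero_of_add_mul_le {u e : ℕ → ℝ} {c : ℝ} (hc : 0 < c)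
    (hbdd : BddBelow (Set.range u)) (he : ∀ n, 0 ≤ e n)
    (hdec : ∀ n, u (n + 1) + c * e n ≤ u n) : Tendsto e atTop (𝓝 0) := by
  have hanti : Antitone u :=
    antitone_nat_of_succ_le fun n => by nlinarith [hdec n, he n]
  have hlim := tendsto_atTop_ciInf hanti hbdd
  have hgap : Tendsto (fun n => (u n - u (n + 1)) / c) atTop (𝓝 0) := by
    simpa using (hlim.sub (hlim.comp (tendsto_add_atTop_nat 1))).div_const c
  refine squeeze_zero he (fun n => ?_) hgap
  rw [le_div_iff₀' hc]
  linarith [hdec n]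

/-- Successive differences of the majorized forward-backward iterates tend to zero
when `h = f + g` is bounded from below. -/
theorem majorized_fb_successive_differences_tendsto_zero {d : ℕ}
    (g f : EuclideanSpace ℝ (Fin d) → ℝ)
    (F : EuclideanSpace ℝ (Fin d) × EuclideanSpace ℝ (Fin d) → ℝ)
    (L τ : ℝ) (hL : 0 < L)
    (hg : Differentiable ℝ g)
    (hlip : ∀ a b : EuclideanSpace ℝ (Fin d),
      ‖gradient g a - gradient g b‖ ≤ L * ‖a - b‖)
    (hmaj : ∀ x xt : EuclideanSpace ℝ (Fin d), f x ≤ F (x, xt))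
    (hdiag : ∀ x : EuclideanSpace ℝ (Fin d), F (x, x) = f x)
    (hτ0 : 0 < τ) (hτ : τ < 1 / L)
    (hbdd : BddBelow (Set.range fun z : EuclideanSpace ℝ (Fin d) => f z + g z))
    (x : ℕ → EuclideanSpace ℝ (Fin d))
    (hiter : ∀ n : ℕ, ∀ z : EuclideanSpace ℝ (Fin d),
      F (x (n + 1), x n) + g (x n) + ⟪x (n + 1) - x n, gradient g (x n)⟫ +
          (1 / (2 * τ)) * ‖x (n + 1) - x n‖ ^ 2
        ≤ F (z, x n) + g (x n) + ⟪z - x n, gradient g (x n)⟫ +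
          (1 / (2 * τ)) * ‖z - x n‖ ^ 2) :
    Filter.Tendsto (fun n : ℕ => ‖x (n + 1) - x n‖) Filter.atTop (nhds 0) := by
  have hc : 0 < 1 / (2 * τ) - L / 2 := by
    have hLτ : L * τ < 1 := (lt_div_iff₀' hL).1 hτ
    rw [sub_pos, div_lt_div_iff₀ two_pos (by positivity)]
    linarith
  have hsq : Tendsto (fun n => ‖x (n + 1) - x n‖ ^ 2) atTop (𝓝 0) :=
    tendsto_zero_of_add_mul_le hc (hbdd.mono (Set.range_comp_subset_range x _))
      (fun n => sq_nonneg _) fun n =>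
        add_add_mul_sq_le_of_fbSurrogate_le hg hlip (hmaj _ _) (hdiag _) (hiter n (x n))
  simpa [Real.sqrt_sq (norm_nonneg _)] using hsq.sqrt
end

section
/- Let E = ℝ^d with the Euclidean inner product, let g : E → ℝ be differentiable with L-Lipschitz gradient ∇g (L > 0), let f : E → ℝ, let F : E × E → ℝ be a jointly continuous tangent majorant of f, let 0 < τ < 1/L, set h = f + g and H(x, x̃) = F(x, x̃) + g(x̃) + ⟨x − x̃, ∇g(x̃)⟩ + (1/(2τ))‖x − x̃‖², and assume h is bounded from below. Let (x^(n)) be a sequence in E such that for every n, x^(n+1) is a global minimizer of z ↦ H(z, x^(n)). Then every cluster point x* of (x^(n)) (i.e., every limit of a convergent subsequence) is a fixed point of the iteration: x* is a global minimizer of z ↦ H(z, x*), that is, H(y, x*) ≥ H(x*, x*) = h(x*) for every y ∈ E. -/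
/-!
The forward–backward majorant `H(·, x̃)` is `F(·, x̃)` plus the linearisation of `g` at `x̃` and a
proximal term. By the descent lemma it dominates `h = f + g` up to `(1/(2τ) - L/2)‖z - x̃‖²`, so
each step decreases `h` by at least that multiple of `‖x⁽ⁿ⁺¹⁾ - x⁽ⁿ⁾‖²`. As `h` is bounded below,
the steps tend to zero; hence along a subsequence converging to `x*` also `x⁽ⁿ⁺¹⁾ → x*`, and the
minimality inequalities `H(x⁽ⁿ⁺¹⁾, x⁽ⁿ⁾) ≤ H(y, x⁽ⁿ⁾)` pass to the limit by continuity of `H`.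
-/

open scoped RealInnerProductSpace
open Filter Topology

section DescentLemma

variable {E : Type*} [NormedAddCommGroup E] [InnerProductSpace ℝ E] [CompleteSpace E]
  {g : E → ℝ}

theorem hasDerivAt_comp_add_smul_of_differentiable (hg : Differentiable ℝ g) (a v : E) (t : ℝ) :
    HasDerivAt (fun s : ℝ => g (a + s • v)) ⟪gradient g (a + t • v), v⟫ t := by
  have hline : HasDerivAt (fun s : ℝ => a + s • v) v t := by
    simpa using ((hasDerivAt_id t).smul_const v).const_add a
  rw [inner_gradient_left]
  exact (hg _).hasFDerivAt.comp_hasDerivAt t hline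

theorem le_add_inner_gradient_add_sq_of_lipschitz_gradient (hg : Differentiable ℝ g) {L : ℝ}
    (hlip : ∀ a b, ‖gradient g a - gradient g b‖ ≤ L * ‖a - b‖) (a b : E) :
    g b ≤ g a + ⟪b - a, gradient g a⟫ + L / 2 * ‖b - a‖ ^ 2 := by
  set v := b - a
  -- `g` minus its quadratic upper model along the segment; antitone by Cauchy–Schwarz.
  set φ : ℝ → ℝ := fun t => g (a + t • v) - t * ⟪gradient g a, v⟫ - L / 2 * t ^ 2 * ‖v‖ ^ 2
  have hφ : ∀ t, HasDerivAt φ (⟪gradient g (a + t • v) - gradient g a, v⟫ - L * t * ‖v‖ ^ 2) t := by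
    intro t
    refine (((hasDerivAt_comp_add_smul_of_differentiable hg a v t).sub
      ((hasDerivAt_id' t).mul_const _)).sub
      (((hasDerivAt_pow 2 t).const_mul (L / 2)).mul_const (‖v‖ ^ 2))).congr_deriv ?_
    rw [inner_sub_left]
    ring
  have hφ_nonpos : ∀ t, 0 ≤ t →
      ⟪gradient g (a + t • v) - gradient g a, v⟫ - L * t * ‖v‖ ^ 2 ≤ 0 := fun t ht =>
    sub_nonpos.2 <|
      calc ⟪gradient g (a + t • v) - gradient g a, v⟫
          ≤ ‖gradient g (a + t • v) - gradient g a‖ * ‖v‖ := real_inner_le_norm _ _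
        _ ≤ L * ‖t • v‖ * ‖v‖ := by gcongr; simpa using hlip (a + t • v) a
        _ = L * t * ‖v‖ ^ 2 := by rw [norm_smul, Real.norm_of_nonneg ht]; ring
  have hanti : AntitoneOn φ (Set.Ici 0) :=
    antitoneOn_of_hasDerivWithinAt_nonpos (convex_Ici 0)
      (fun t _ => (hφ t).continuousAt.continuousWithinAt) (fun t _ => (hφ t).hasDerivWithinAt)
      (fun t ht => hφ_nonpos t (interior_subset ht))
  have h01 := hanti (Set.mem_Ici.2 le_rfl) (Set.mem_Ici.2 zero_le_one) zero_le_one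
  simp only [φ, v, zero_smul, add_zero, one_smul, add_sub_cancel, zero_mul, sub_zero,
    one_mul, one_pow, mul_one, zero_pow two_ne_zero, mul_zero] at h01
  rw [real_inner_comm]
  linarith

end DescentLemma

theorem tendsto_zero_of_add_le_of_bddBelow {a b : ℕ → ℝ} (hb : ∀ n, 0 ≤ b n)
    (hab : ∀ n, a (n + 1) + b n ≤ a n) (ha : BddBelow (Set.range a)) :
    Tendsto b atTop (𝓝 0) := by
  have hanti : Antitone a := antitone_nat_of_succ_le fun n => by linarith [hb n, hab n]
  have hlim := tendsto_atTop_ciInf hanti ha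
  have hdiff : Tendsto (fun n => a n - a (n + 1)) atTop (𝓝 0) := by
    simpa using hlim.sub (hlim.comp (tendsto_add_atTop_nat 1))
  exact squeeze_zero hb (fun n => by linarith [hab n]) hdiff

theorem tendsto_sub_zero_of_sufficient_decrease {E : Type*} [NormedAddCommGroup E]
    {u : ℕ → E} {a : ℕ → ℝ} {c : ℝ} (hc : 0 < c)
    (hdec : ∀ n, a (n + 1) + c * ‖u (n + 1) - u n‖ ^ 2 ≤ a n) (ha : BddBelow (Set.range a)) :
    Tendsto (fun n => u (n + 1) - u n) atTop (𝓝 0) := by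
  have hsq : Tendsto (fun n => c * ‖u (n + 1) - u n‖ ^ 2) atTop (𝓝 0) :=
    tendsto_zero_of_add_le_of_bddBelow (fun n => by positivity) hdec ha
  have hnorm := (hsq.const_mul c⁻¹).sqrt
  simp only [← mul_assoc, inv_mul_cancel₀ hc.ne', one_mul, mul_zero, Real.sqrt_zero,
    Real.sqrt_sq (norm_nonneg _)] at hnorm
  exact tendsto_zero_iff_norm_tendsto_zero.mpr hnorm

theorem one_div_two_mul_sub_div_two_pos {τ L : ℝ} (hτ0 : 0 < τ) (hτ : τ < 1 / L) :
    0 < 1 / (2 * τ) - L / 2 := by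
  have hτL : τ * L < 1 := by
    rcases le_or_gt L 0 with hL | hL
    · nlinarith
    · exact (lt_div_iff₀ hL).mp hτ
  rw [show 1 / (2 * τ) - L / 2 = (1 - τ * L) / (2 * τ) by field_simp]
  exact div_pos (by linarith) (by linarith)

section Majorant

variable {E : Type*} [NormedAddCommGroup E] [InnerProductSpace ℝ E] [CompleteSpace E]
  {F : E × E → ℝ} {f g : E → ℝ} {τ : ℝ}

/-- The paper's `H(z, x̃)`. -/
noncomputable def fbMajorant (F : E × E → ℝ) (g : E → ℝ) (τ : ℝ) (z xt : E) : ℝ :=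
  F (z, xt) + g xt + ⟪z - xt, gradient g xt⟫ + 1 / (2 * τ) * ‖z - xt‖ ^ 2

theorem fbMajorant_self {x : E} (hdiag : F (x, x) = f x) :
    fbMajorant F g τ x x = f x + g x := by
  simp [fbMajorant, hdiag]

theorem continuous_fbMajorant (hF : Continuous F) (hg : Continuous g)
    (hgrad : Continuous (gradient g)) :
    Continuous fun p : E × E => fbMajorant F g τ p.1 p.2 := by
  unfold fbMajorant
  fun_prop

theorem add_mul_sq_le_of_fbMajorant_le (hg : Differentiable ℝ g) {L : ℝ}
    (hlip : ∀ a b, ‖gradient g a - gradient g b‖ ≤ L * ‖a - b‖) {x x' : E}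
    (hmaj : f x' ≤ F (x', x)) (hdiag : F (x, x) = f x)
    (hmin : fbMajorant F g τ x' x ≤ fbMajorant F g τ x x) :
    f x' + g x' + (1 / (2 * τ) - L / 2) * ‖x' - x‖ ^ 2 ≤ f x + g x := by
  rw [fbMajorant_self hdiag, fbMajorant] at hmin
  linarith [le_add_inner_gradient_add_sq_of_lipschitz_gradient hg hlip x x']

end Majorant

theorem majorized_fb_cluster_points_are_fixed_general {d : ℕ}
    (g f : EuclideanSpace ℝ (Fin d) → ℝ)
    (F : EuclideanSpace ℝ (Fin d) × EuclideanSpace ℝ (Fin d) → ℝ)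
    (L τ : ℝ)
    (hg : Differentiable ℝ g)
    (hlip : ∀ a b : EuclideanSpace ℝ (Fin d),
      ‖gradient g a - gradient g b‖ ≤ L * ‖a - b‖)
    (hFcont : Continuous F)
    (hmaj : ∀ x xt : EuclideanSpace ℝ (Fin d), f x ≤ F (x, xt))
    (hdiag : ∀ x : EuclideanSpace ℝ (Fin d), F (x, x) = f x)
    (hτ0 : 0 < τ) (hτ : τ < 1 / L)
    (hbdd : BddBelow (Set.range fun z : EuclideanSpace ℝ (Fin d) => f z + g z))
    (x : ℕ → EuclideanSpace ℝ (Fin d))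
    (hiter : ∀ n : ℕ, ∀ z : EuclideanSpace ℝ (Fin d),
      F (x (n + 1), x n) + g (x n) + ⟪x (n + 1) - x n, gradient g (x n)⟫ +
          (1 / (2 * τ)) * ‖x (n + 1) - x n‖ ^ 2
        ≤ F (z, x n) + g (x n) + ⟪z - x n, gradient g (x n)⟫ +
          (1 / (2 * τ)) * ‖z - x n‖ ^ 2)
    (xstar : EuclideanSpace ℝ (Fin d))
    (hcluster : ∃ φ : ℕ → ℕ, StrictMono φ ∧
      Filter.Tendsto (fun k : ℕ => x (φ k)) Filter.atTop (nhds xstar)) :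
    (∀ y : EuclideanSpace ℝ (Fin d),
      F (xstar, xstar) + g xstar + ⟪xstar - xstar, gradient g xstar⟫ +
          (1 / (2 * τ)) * ‖xstar - xstar‖ ^ 2
        ≤ F (y, xstar) + g xstar + ⟪y - xstar, gradient g xstar⟫ +
          (1 / (2 * τ)) * ‖y - xstar‖ ^ 2) ∧
    F (xstar, xstar) + g xstar + ⟪xstar - xstar, gradient g xstar⟫ +
        (1 / (2 * τ)) * ‖xstar - xstar‖ ^ 2
      = f xstar + g xstar := by
  obtain ⟨φ, hφ, hxφ⟩ := hcluster
  have hgrad : Continuous (gradient g) :=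
    (LipschitzWith.of_dist_le' (K := L) (by simpa only [dist_eq_norm] using hlip)).continuous
  have hH := continuous_fbMajorant (τ := τ) hFcont hg.continuous hgrad
  have hstep : Tendsto (fun n => x (n + 1) - x n) atTop (𝓝 0) :=
    tendsto_sub_zero_of_sufficient_decrease (one_div_two_mul_sub_div_two_pos hτ0 hτ)
      (fun n => add_mul_sq_le_of_fbMajorant_le hg hlip (hmaj _ _) (hdiag _) (hiter n (x n)))
      (hbdd.mono (Set.range_comp_subset_range x _))
  have hxφ' : Tendsto (fun k => x (φ k + 1)) atTop (𝓝 xstar) := by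
    simpa using (hstep.comp hφ.tendsto_atTop).add hxφ
  refine ⟨fun y => le_of_tendsto_of_tendsto' ((hH.tendsto _).comp (hxφ'.prodMk_nhds hxφ))
    ((hH.tendsto _).comp (tendsto_const_nhds.prodMk_nhds hxφ)) fun k => hiter (φ k) y,
    fbMajorant_self (hdiag xstar)⟩

/-- Every cluster point `x*` of the majorized forward-backward iterates is a fixed
point of the iteration: `x*` is a global minimizer of `z ↦ H (z, x*)`, i.e.
`H (y, x*) ≥ H (x*, x*) = h x*` for all `y`. -/
theorem majorized_fb_cluster_points_are_fixed {d : ℕ}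
    (g f : EuclideanSpace ℝ (Fin d) → ℝ)
    (F : EuclideanSpace ℝ (Fin d) × EuclideanSpace ℝ (Fin d) → ℝ)
    (L τ : ℝ) (hL : 0 < L)
    (hg : Differentiable ℝ g)
    (hlip : ∀ a b : EuclideanSpace ℝ (Fin d),
      ‖gradient g a - gradient g b‖ ≤ L * ‖a - b‖)
    (hFcont : Continuous F)
    (hmaj : ∀ x xt : EuclideanSpace ℝ (Fin d), f x ≤ F (x, xt))
    (hdiag : ∀ x : EuclideanSpace ℝ (Fin d), F (x, x) = f x)
    (hτ0 : 0 < τ) (hτ : τ < 1 / L)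
    (hbdd : BddBelow (Set.range fun z : EuclideanSpace ℝ (Fin d) => f z + g z))
    (x : ℕ → EuclideanSpace ℝ (Fin d))
    (hiter : ∀ n : ℕ, ∀ z : EuclideanSpace ℝ (Fin d),
      F (x (n + 1), x n) + g (x n) + ⟪x (n + 1) - x n, gradient g (x n)⟫ +
          (1 / (2 * τ)) * ‖x (n + 1) - x n‖ ^ 2
        ≤ F (z, x n) + g (x n) + ⟪z - x n, gradient g (x n)⟫ +
          (1 / (2 * τ)) * ‖z - x n‖ ^ 2)
    (xstar : EuclideanSpace ℝ (Fin d))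
    (hcluster : ∃ φ : ℕ → ℕ, StrictMono φ ∧
      Filter.Tendsto (fun k : ℕ => x (φ k)) Filter.atTop (nhds xstar)) :
    (∀ y : EuclideanSpace ℝ (Fin d),
      F (xstar, xstar) + g xstar + ⟪xstar - xstar, gradient g xstar⟫ +
          (1 / (2 * τ)) * ‖xstar - xstar‖ ^ 2
        ≤ F (y, xstar) + g xstar + ⟪y - xstar, gradient g xstar⟫ +
          (1 / (2 * τ)) * ‖y - xstar‖ ^ 2) ∧
    F (xstar, xstar) + g xstar + ⟪xstar - xstar, gradient g xstar⟫ +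
        (1 / (2 * τ)) * ‖xstar - xstar‖ ^ 2
      = f xstar + g xstar :=
  majorized_fb_cluster_points_are_fixed_general g f F L τ hg hlip hFcont hmaj hdiag hτ0 hτ hbdd x
    hiter xstar hcluster
end
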